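/- Let δ_1,…,δ_n be independent zero-mean random variables with |δ_i| ≤ u < 1 almost surely and ρ_i ∈ {1,-1}. Then for any ζ ∈ [0,1), with probability at least ζ, ∏_{i=1}^n (1+δ_i)^{ρ_i} = 1 + θ with |θ| ≤ exp(t + nu²/(1-u)) - 1, where t = (u/(1-u))·sqrt(-2n·log((1-ζ)/2)). -/

import Mathlib

/-!
Writing `1 + δᵢ = exp (log (1 + δᵢ))`, the product is `exp S` with `S = ∑ ρᵢ log (1 + δᵢ)`.
The summands are independent and bounded by `c = u/(1-u)`, and since `E δᵢ = 0` their means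
`E log (1 + δᵢ) = E (log (1 + δᵢ) - δᵢ)` are at most `u²/(1-u)` in absolute value. Hoeffding's
inequality puts `S` within `t` of its mean outside an event of probability
`2 exp (-t²/(2nc²)) = 1 - ζ`, so `|S| ≤ t + nu²/(1-u)` and `|exp S - 1| ≤ exp |S| - 1`.
-/

open MeasureTheory ProbabilityTheory Real

lemma abs_log_one_add_le_div {x u : ℝ} (hx : |x| ≤ u) (hu : u < 1) :
    |log (1 + x)| ≤ u / (1 - u) := by
  obtain ⟨hxl, hxu⟩ := abs_le.mp hx
  have h1u : 0 < 1 - u := by linarith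
  have hpos : 0 < 1 + x := by linarith
  rw [abs_le]
  constructor
  · calc -(u / (1 - u)) ≤ x / (1 + x) := by
          rw [neg_div', div_le_div_iff₀ h1u hpos]; nlinarith
      _ = 1 - (1 + x)⁻¹ := by field_simp; ring
      _ ≤ log (1 + x) := one_sub_inv_le_log_of_pos hpos
  · calc log (1 + x) ≤ x := by linarith [log_le_sub_one_of_pos hpos]
      _ ≤ u / (1 - u) := by rw [le_div_iff₀ h1u]; nlinarith [abs_nonneg x]

lemma abs_log_one_add_sub_self_le {x u : ℝ} (hx : |x| ≤ u) (hu : u < 1) :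
    |log (1 + x) - x| ≤ u ^ 2 / (1 - u) := by
  have h := abs_log_sub_add_sum_range_le (x := -x) (by rw [abs_neg]; exact hx.trans_lt hu) 1
  simp only [Finset.range_one, Finset.sum_singleton, abs_neg] at h
  norm_num at h
  calc |log (1 + x) - x| = |-x + log (1 + x)| := by ring_nf
    _ ≤ x ^ 2 / (1 - |x|) := h
    _ ≤ u ^ 2 / (1 - u) := by
      apply div_le_div₀ (sq_nonneg u) _ (by linarith) (by linarith)
      rw [← sq_abs]; gcongr

lemma abs_exp_sub_one_le_exp_abs_sub_one (x : ℝ) : |exp x - 1| ≤ exp |x| - 1 := by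
  rcases le_total 0 x with hx | hx
  · rw [abs_of_nonneg hx, abs_of_nonneg (by linarith [add_one_le_exp x])]
  · rw [abs_of_nonpos hx, abs_of_nonpos (by linarith [exp_le_one_iff.mpr hx])]
    linarith [add_one_le_exp x, add_one_le_exp (-x)]

lemma zpow_eq_exp_mul_log {x : ℝ} (hx : 0 < x) (k : ℤ) : x ^ k = exp (k * log x) := by
  rw [← rpow_intCast, rpow_def_of_pos hx, mul_comm]

lemma exp_neg_mul_sqrt_sq_div {c n p : ℝ} (hc : c ≠ 0) (hn : 0 < n) (hp0 : 0 < p) (hp1 : p ≤ 1) :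
    exp (-(c * sqrt (-2 * n * log p)) ^ 2 / (2 * n * c ^ 2)) = p := by
  have : 0 ≤ -2 * n * log p := by nlinarith [log_nonpos hp0.le hp1]
  rw [mul_pow, sq_sqrt this]
  field_simp
  exact exp_log hp0

lemma abs_prod_zpow_sub_one_le {ι : Type*} [Fintype ι] {x m : ι → ℝ} (k : ι → ℤ)
    (hx : ∀ i, 0 < 1 + x i) {t b : ℝ} (hdev : |∑ i, (k i * log (1 + x i) - m i)| ≤ t)
    (hm : ∀ i, |m i| ≤ b) :
    |∏ i, (1 + x i) ^ k i - 1| ≤ exp (t + Fintype.card ι * b) - 1 := by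
  have hprod : ∏ i, (1 + x i) ^ k i = exp (∑ i, k i * log (1 + x i)) := by
    rw [exp_sum]
    exact Finset.prod_congr rfl fun i _ ↦ zpow_eq_exp_mul_log (hx i) _
  have hbias : |∑ i, m i| ≤ Fintype.card ι * b := by
    calc |∑ i, m i| ≤ ∑ i, |m i| := Finset.abs_sum_le_sum_abs _ _
      _ ≤ ∑ _i, b := Finset.sum_le_sum fun i _ ↦ hm i
      _ = Fintype.card ι * b := by simp
  rw [Finset.sum_sub_distrib] at hdev
  have hsum : |∑ i, k i * log (1 + x i)| ≤ t + Fintype.card ι * b := by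
    linarith [abs_sub_abs_le_abs_sub (∑ i, k i * log (1 + x i)) (∑ i, m i)]
  rw [hprod]
  exact (abs_exp_sub_one_le_exp_abs_sub_one _).trans (by gcongr)

lemma abs_integral_log_one_add_le {Ω : Type*} [MeasurableSpace Ω] {μ : Measure Ω}
    [IsProbabilityMeasure μ] {X : Ω → ℝ} (hX : AEMeasurable X μ) (hmean : μ[X] = 0) {u : ℝ}
    (hbd : ∀ᵐ ω ∂μ, |X ω| ≤ u) (hu : u < 1) :
    |∫ ω, log (1 + X ω) ∂μ| ≤ u ^ 2 / (1 - u) := by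
  have hlog_int : Integrable (fun ω ↦ log (1 + X ω)) μ :=
    .of_bound (hX.const_add 1).log.aestronglyMeasurable _
      (by filter_upwards [hbd] with ω hω using abs_log_one_add_le_div hω hu)
  have hX_int : Integrable X μ :=
    .of_bound hX.aestronglyMeasurable u (by filter_upwards [hbd] with ω hω using hω)
  have hcenter : ∫ ω, log (1 + X ω) ∂μ = ∫ ω, (log (1 + X ω) - X ω) ∂μ := by
    rw [integral_sub hlog_int hX_int, hmean, sub_zero]
  rw [hcenter, ← Real.norm_eq_abs]
  simpa using norm_integral_le_of_norm_le_const (μ := μ) (f := fun ω ↦ log (1 + X ω) - X ω)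
    (by filter_upwards [hbd] with ω hω using abs_log_one_add_sub_self_le hω hu)

lemma measureReal_le_abs_sum_sub_integral_le {Ω ι : Type*} [MeasurableSpace Ω] {μ : Measure Ω}
    [IsProbabilityMeasure μ] {X : ι → Ω → ℝ} (hX : ∀ i, Measurable (X i))
    (hindep : iIndepFun X μ) {c : ℝ} (hbd : ∀ i, ∀ᵐ ω ∂μ, |X i ω| ≤ c) (s : Finset ι)
    {ε : ℝ} (hε : 0 ≤ ε) :
    μ.real {ω | ε ≤ |∑ i ∈ s, (X i ω - μ[X i])|} ≤ 2 * exp (-ε ^ 2 / (2 * s.card * c ^ 2)) := by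
  set K : NNReal := (‖c - -c‖₊ / 2) ^ 2
  have hK : (K : ℝ) = c ^ 2 := by
    simp only [K, NNReal.coe_pow, NNReal.coe_div, coe_nnnorm, Real.norm_eq_abs]
    rw [sub_neg_eq_add, ← two_mul, abs_mul, abs_two, NNReal.coe_ofNat,
      mul_div_cancel_left₀ _ two_ne_zero, sq_abs]
  have hsubG : ∀ i ∈ s, HasSubgaussianMGF (fun ω ↦ X i ω - μ[X i]) K μ := fun i _ ↦
    hasSubgaussianMGF_of_mem_Icc (hX i).aemeasurable
      (by filter_upwards [hbd i] with ω hω using abs_le.mp hω)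
  have hindep' : iIndepFun (fun i ↦ (· - μ[X i]) ∘ X i) μ :=
    hindep.comp _ fun _ ↦ measurable_id.sub_const _
  have hsum := HasSubgaussianMGF.sum_of_iIndepFun hindep' hsubG
  have hsplit : {ω | ε ≤ |∑ i ∈ s, (X i ω - μ[X i])|}
      ⊆ {ω | ε ≤ ∑ i ∈ s, (X i ω - μ[X i])} ∪ {ω | ε ≤ -∑ i ∈ s, (X i ω - μ[X i])} :=
    fun _ hω ↦ le_abs.mp (Set.mem_ofPred.mp hω)
  calc _ ≤ _ := measureReal_mono hsplit
    _ ≤ _ := measureReal_union_le _ _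
    _ ≤ exp (-ε ^ 2 / (2 * s.card * c ^ 2)) + exp (-ε ^ 2 / (2 * s.card * c ^ 2)) := by
      gcongr
      · simpa [hK, mul_assoc] using hsum.measure_ge_le hε
      · simpa [hK, mul_assoc] using hsum.neg.measure_ge_le hε
    _ = _ := by ring

lemma ofReal_le_measure_of_ae_mem_of_notMem {Ω : Type*} [MeasurableSpace Ω] {μ : Measure Ω}
    [IsProbabilityMeasure μ] {s t : Set Ω} {ζ : ℝ} (ht : μ.real t ≤ 1 - ζ)
    (hst : ∀ᵐ ω ∂μ, ω ∉ t → ω ∈ s) :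
    ENNReal.ofReal ζ ≤ μ s := by
  have hcover : 1 ≤ μ.real tᶜ + μ.real t := by
    simpa using measureReal_union_le (μ := μ) tᶜ t
  calc ENNReal.ofReal ζ ≤ ENNReal.ofReal (μ.real tᶜ) := ENNReal.ofReal_le_ofReal (by linarith)
    _ = μ tᶜ := ofReal_measureReal
    _ ≤ μ s := measure_mono_ae hst

/-- Modified mean-informed backward error analysis (MMIBEA).  Let `δ_1,…,δ_n`
be independent zero-mean random variables with `|δ_i| ≤ u < 1` a.s. and
`ρ_i = ±1`.  Then for any `ζ ∈ [0,1)`, with probability at least `ζ`,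
`|∏ (1+δ_i)^(ρ_i) - 1| ≤ exp(t + nu²/(1-u)) - 1`, where
`t = (u/(1-u))·sqrt(-2n·log((1-ζ)/2))`. -/
theorem mmibea {Ω : Type*} [MeasurableSpace Ω]
    (P : Measure Ω) [IsProbabilityMeasure P] (n : ℕ) (hn : 1 ≤ n)
    (u : ℝ) (hu0 : 0 < u) (hu1 : u < 1)
    (δ : Fin n → Ω → ℝ) (hmeas : ∀ i, Measurable (δ i))
    (hindep : iIndepFun δ P)
    (hmean : ∀ i, ∫ ω, δ i ω ∂P = 0)
    (hbd : ∀ i, ∀ᵐ ω ∂P, |δ i ω| ≤ u)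
    (ρ : Fin n → ℤ) (hρ : ∀ i, ρ i = 1 ∨ ρ i = -1)
    (ζ : ℝ) (hζ0 : 0 ≤ ζ) (hζ1 : ζ < 1) :
    ENNReal.ofReal ζ ≤
      P {ω | |(∏ i, (1 + δ i ω) ^ (ρ i)) - 1| ≤
        Real.exp ((u / (1 - u)) * Real.sqrt (-2 * n * Real.log ((1 - ζ) / 2)) +
          n * u ^ 2 / (1 - u)) - 1} := by
  set c := u / (1 - u)
  have hc : 0 < c := div_pos hu0 (sub_pos.2 hu1)
  set t := c * sqrt (-2 * n * log ((1 - ζ) / 2))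
  set L : Fin n → Ω → ℝ := fun i ω ↦ ρ i * log (1 + δ i ω)
  have habs_ρ : ∀ i, |(ρ i : ℝ)| = 1 := fun i ↦ by rcases hρ i with h | h <;> simp [h]
  have hL_meas : ∀ i, Measurable (L i) := fun i ↦
    measurable_const.mul (measurable_const.add (hmeas i)).log
  have hL_indep : iIndepFun L P :=
    hindep.comp (fun i x ↦ ρ i * log (1 + x)) fun _ ↦
      measurable_const.mul (measurable_const.add measurable_id).log
  have hL_bd : ∀ i, ∀ᵐ ω ∂P, |L i ω| ≤ c := fun i ↦ by
    filter_upwards [hbd i] with ω hω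
    rw [abs_mul, habs_ρ, one_mul]
    exact abs_log_one_add_le_div hω hu1
  have hL_mean : ∀ i, |P[L i]| ≤ u ^ 2 / (1 - u) := fun i ↦ by
    rw [integral_const_mul, abs_mul, habs_ρ, one_mul]
    exact abs_integral_log_one_add_le (hmeas i).aemeasurable (hmean i) (hbd i) hu1
  have htail : P.real {ω | t ≤ |∑ i, (L i ω - P[L i])|} ≤ 1 - ζ := by
    calc _ ≤ 2 * exp (-t ^ 2 / (2 * n * c ^ 2)) := by
          simpa using measureReal_le_abs_sum_sub_integral_le hL_meas hL_indep hL_bd .univ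
            (mul_nonneg hc.le (sqrt_nonneg _))
      _ = 1 - ζ := by
          rw [exp_neg_mul_sqrt_sq_div hc.ne' (by exact_mod_cast hn) (by linarith) (by linarith)]
          ring
  refine ofReal_le_measure_of_ae_mem_of_notMem htail ?_
  filter_upwards [ae_all_iff.2 hbd] with ω hω hgood
  simpa [mul_div_assoc] using abs_prod_zpow_sub_one_le ρ
    (fun i ↦ by linarith [(abs_le.mp (hω i)).1]) (not_le.mp hgood).le hL_mean
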